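/- arXiv:2509.17782 — 2 statements merged into one kernel-verified Lean document; each statement's English description precedes it below -/
import Mathlib

section
/- Every Hermitian matrix A ∈ M_3(ℂ) has a 2-coloring: there exist orthogonal projections P_1, P_2 ∈ M_3(ℂ) with P_1 + P_2 = I_3 such that P_i A P_i is a scalar multiple of P_i for i = 1, 2. -/
open Matrix

/-- An orthogonal projection in `M_n(ℂ)`: a Hermitian idempotent matrix. -/
def IsProjection {n : ℕ} (P : Matrix (Fin n) (Fin n) ℂ) : Prop :=
  P.IsHermitian ∧ P * P = P

/-- The compression space `PVP = span {PAP : A ∈ V}`. -/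
noncomputable def compressionSpace {n : ℕ} (V : Set (Matrix (Fin n) (Fin n) ℂ))
    (P : Matrix (Fin n) (Fin n) ℂ) : Submodule ℂ (Matrix (Fin n) (Fin n) ℂ) :=
  Submodule.span ℂ ((fun A => P * A * P) '' V)

/-- A `k`-clique for `V`: a rank-`k` projection `P` with `dim (PVP) = k²`. -/
def IsClique {n : ℕ} (V : Set (Matrix (Fin n) (Fin n) ℂ)) (k : ℕ)
    (P : Matrix (Fin n) (Fin n) ℂ) : Prop :=
  IsProjection P ∧ P.rank = k ∧ Module.finrank ℂ (compressionSpace V P) = k ^ 2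

/-- A `k`-anticlique for `V`: a rank-`k` projection `P` such that `PAP` is a scalar
multiple of `P` for every `A ∈ V`. -/
def IsAnticlique {n : ℕ} (V : Set (Matrix (Fin n) (Fin n) ℂ)) (k : ℕ)
    (P : Matrix (Fin n) (Fin n) ℂ) : Prop :=
  IsProjection P ∧ P.rank = k ∧ ∀ A ∈ V, ∃ c : ℂ, P * A * P = c • P

/-- `V` is triangle-free if it has no 3-clique. -/
def TriangleFree {n : ℕ} (V : Set (Matrix (Fin n) (Fin n) ℂ)) : Prop :=
  ∀ P : Matrix (Fin n) (Fin n) ℂ, ¬ IsClique V 3 P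

/-- `V` is strongly triangle-free if every rank-3 projection dominates a 2-anticlique. -/
def StronglyTriangleFree {n : ℕ} (V : Set (Matrix (Fin n) (Fin n) ℂ)) : Prop :=
  ∀ Q : Matrix (Fin n) (Fin n) ℂ, IsProjection Q → Q.rank = 3 →
    ∃ P : Matrix (Fin n) (Fin n) ℂ, IsAnticlique V 2 P ∧ P * Q = P ∧ Q * P = P

/-- A `k`-coloring of a matrix `A ∈ M_n(ℂ)`: projections `P_1, …, P_k` summing to the
identity, each of which is an anticlique for `A`. -/
def IsMatrixColoring {n : ℕ} (A : Matrix (Fin n) (Fin n) ℂ) (k : ℕ)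
    (P : Fin k → Matrix (Fin n) (Fin n) ℂ) : Prop :=
  (∑ i, P i) = 1 ∧
    ∀ i, IsProjection (P i) ∧ ∃ c : ℂ, P i * A * P i = c • P i

set_option maxHeartbeats 1000000 in
private lemma core_diag (d : Fin 3 → ℝ) (a b : ℝ) (hn : a^2 + b^2 ≠ 0)
    (key : a^2 * d 1 + b^2 * d 2 = (a^2 + b^2) * d 0) :
    ∃ P₁ P₂ : Matrix (Fin 3) (Fin 3) ℂ,
      IsProjection P₁ ∧ IsProjection P₂ ∧ P₁ + P₂ = 1 ∧
      (∃ c : ℂ, P₁ * (Matrix.diagonal (fun i => (d i : ℂ))) * P₁ = c • P₁) ∧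
      (∃ c : ℂ, P₂ * (Matrix.diagonal (fun i => (d i : ℂ))) * P₂ = c • P₂) := by
  have hc : ((a:ℂ)^2 + (b:ℂ)^2) ≠ 0 := by
    have h2 : ((a^2+b^2 : ℝ) : ℂ) ≠ 0 := Complex.ofReal_ne_zero.mpr hn
    push_cast at h2
    exact h2
  have key' : (a:ℂ)^2 * (d 1:ℂ) + (b:ℂ)^2 * (d 2:ℂ) = ((a:ℂ)^2 + (b:ℂ)^2) * (d 0:ℂ) := by
    exact_mod_cast congrArg Complex.ofReal key
  have hD : (Matrix.diagonal (fun i => (d i:ℂ))) = !![(d 0:ℂ),0,0; 0,(d 1:ℂ),0; 0,0,(d 2:ℂ)] := by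
    ext i j
    fin_cases i <;> fin_cases j <;> simp [Matrix.diagonal, vecHead, vecTail]
  rw [hD]
  refine ⟨!![0,0,0; 0,((b^2/(a^2+b^2):ℝ):ℂ), -((a*b/(a^2+b^2):ℝ):ℂ);
            0, -((a*b/(a^2+b^2):ℝ):ℂ), ((a^2/(a^2+b^2):ℝ):ℂ)],
    !![1,0,0; 0,((a^2/(a^2+b^2):ℝ):ℂ), ((a*b/(a^2+b^2):ℝ):ℂ);
       0, ((a*b/(a^2+b^2):ℝ):ℂ), ((b^2/(a^2+b^2):ℝ):ℂ)], ⟨?_, ?_⟩, ⟨?_, ?_⟩, ?_,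
    ⟨(((b^2*d 1 + a^2*d 2)/(a^2+b^2) : ℝ):ℂ), ?_⟩, ⟨(d 0 : ℂ), ?_⟩⟩
  · ext i j
    fin_cases i <;> fin_cases j <;>
      simp [Matrix.conjTranspose_apply, vecHead, vecTail, Complex.star_def, Complex.conj_ofReal]
  · ext i j
    fin_cases i <;> fin_cases j <;>
      simp [Matrix.mul_apply, Fin.sum_univ_three, vecHead, vecTail] <;>
      (try push_cast) <;> (try field_simp [hc]) <;> ring
  · ext i j
    fin_cases i <;> fin_cases j <;>
      simp [Matrix.conjTranspose_apply, vecHead, vecTail, Complex.star_def, Complex.conj_ofReal]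
  · ext i j
    fin_cases i <;> fin_cases j <;>
      simp [Matrix.mul_apply, Fin.sum_univ_three, vecHead, vecTail] <;>
      (try push_cast) <;> (try field_simp [hc]) <;> ring
  · ext i j
    fin_cases i <;> fin_cases j <;>
      simp [Matrix.one_apply, vecHead, vecTail] <;>
      (try push_cast) <;> (try field_simp [hc]) <;> (try ring)
  · ext i j
    fin_cases i <;> fin_cases j <;>
      simp [Matrix.mul_apply, Fin.sum_univ_three, vecHead, vecTail] <;>
      (try push_cast) <;> (try field_simp [hc]) <;> ring
  · ext i j
    fin_cases i <;> fin_cases j <;>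
      simp [Matrix.mul_apply, Fin.sum_univ_three, vecHead, vecTail] <;>
      (try push_cast) <;> (try field_simp [hc]) <;>
      (first
        | ring1
        | linear_combination key'
        | linear_combination ((a:ℂ)*(b:ℂ)) * key'
        | linear_combination ((a:ℂ)^2) * key'
        | linear_combination ((b:ℂ)^2) * key'
        | linear_combination ((a:ℂ)^2*((a:ℂ)^2+(b:ℂ)^2)) * key'
        | linear_combination ((b:ℂ)^2*((a:ℂ)^2+(b:ℂ)^2)) * key'
        | linear_combination ((a:ℂ)*(b:ℂ)*((a:ℂ)^2+(b:ℂ)^2)) * key')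

private lemma exists_ab (x y z : ℝ) (h : (y - x) * (z - x) ≤ 0) :
    ∃ a b : ℝ, a^2 + b^2 ≠ 0 ∧ a^2 * y + b^2 * z = (a^2 + b^2) * x := by
  by_cases h1 : y = x
  · exact ⟨1, 0, by norm_num, by rw [h1]; ring⟩
  · refine ⟨Real.sqrt |z - x|, Real.sqrt |y - x|, ?_, ?_⟩ <;>
      rw [Real.sq_sqrt (abs_nonneg _), Real.sq_sqrt (abs_nonneg _)]
    · intro hcontra
      apply h1
      have := abs_nonneg (z - x)
      have := abs_nonneg (y - x)
      have : |y - x| = 0 := by linarith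
      have := abs_eq_zero.mp this
      linarith
    · rcases le_total x y with h2|h2 <;> rcases le_total x z with h3|h3 <;>
        rw [abs_sub_comm z x, abs_sub_comm y x] <;>
        rcases abs_cases (x - z) with ⟨e1,_⟩|⟨e1,_⟩ <;>
        rcases abs_cases (x - y) with ⟨e2,_⟩|⟨e2,_⟩ <;>
        rw [e1, e2] <;> nlinarith

private lemma median (d : Fin 3 → ℝ) :
    (d 1 - d 0) * (d 2 - d 0) ≤ 0 ∨ (d 0 - d 1) * (d 2 - d 1) ≤ 0 ∨
    (d 0 - d 2) * (d 1 - d 2) ≤ 0 := by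
  rcases le_total (d 0) (d 1) with h1|h1 <;> rcases le_total (d 1) (d 2) with h2|h2 <;>
    rcases le_total (d 0) (d 2) with h3|h3 <;>
    first
      | (left; nlinarith)
      | (right; left; nlinarith)
      | (right; right; nlinarith)

private lemma conj_transfer (U D : Matrix (Fin 3) (Fin 3) ℂ)
    (hU : U * Uᴴ = 1) (hU' : Uᴴ * U = 1)
    (h : ∃ P₁ P₂ : Matrix (Fin 3) (Fin 3) ℂ,
      IsProjection P₁ ∧ IsProjection P₂ ∧ P₁ + P₂ = 1 ∧
      (∃ c : ℂ, P₁ * D * P₁ = c • P₁) ∧ (∃ c : ℂ, P₂ * D * P₂ = c • P₂)) :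
    ∃ P₁ P₂ : Matrix (Fin 3) (Fin 3) ℂ,
      IsProjection P₁ ∧ IsProjection P₂ ∧ P₁ + P₂ = 1 ∧
      (∃ c : ℂ, P₁ * (U * D * Uᴴ) * P₁ = c • P₁) ∧
      (∃ c : ℂ, P₂ * (U * D * Uᴴ) * P₂ = c • P₂) := by
  obtain ⟨P₁, P₂, ⟨h₁h, h₁i⟩, ⟨h₂h, h₂i⟩, hsum, ⟨c₁, hc₁⟩, ⟨c₂, hc₂⟩⟩ := h
  have herm : ∀ P : Matrix (Fin 3) (Fin 3) ℂ, P.IsHermitian → (U * P * Uᴴ).IsHermitian := by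
    intro P hP
    unfold Matrix.IsHermitian at *
    rw [Matrix.conjTranspose_mul, Matrix.conjTranspose_mul, Matrix.conjTranspose_conjTranspose,
      hP, Matrix.mul_assoc]
  have idem : ∀ P : Matrix (Fin 3) (Fin 3) ℂ, P * P = P → (U * P * Uᴴ) * (U * P * Uᴴ) = U * P * Uᴴ := by
    intro P hP
    calc (U * P * Uᴴ) * (U * P * Uᴴ) = U * P * (Uᴴ * U) * P * Uᴴ := by
          simp only [Matrix.mul_assoc]
      _ = U * (P * P) * Uᴴ := by rw [hU']; simp only [Matrix.mul_one, Matrix.mul_assoc]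
      _ = U * P * Uᴴ := by rw [hP, Matrix.mul_assoc]
  have comp : ∀ (P : Matrix (Fin 3) (Fin 3) ℂ) (c : ℂ), P * D * P = c • P →
      (U * P * Uᴴ) * (U * D * Uᴴ) * (U * P * Uᴴ) = c • (U * P * Uᴴ) := by
    intro P c hP
    calc (U * P * Uᴴ) * (U * D * Uᴴ) * (U * P * Uᴴ)
        = U * P * (Uᴴ * U) * D * (Uᴴ * U) * P * Uᴴ := by simp only [Matrix.mul_assoc]
      _ = U * (P * D * P) * Uᴴ := by rw [hU']; simp only [Matrix.mul_one, Matrix.mul_assoc]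
      _ = c • (U * P * Uᴴ) := by
          rw [hP]; simp only [Matrix.mul_smul, Matrix.smul_mul]
  refine ⟨U * P₁ * Uᴴ, U * P₂ * Uᴴ, ⟨herm _ h₁h, idem _ h₁i⟩, ⟨herm _ h₂h, idem _ h₂i⟩, ?_,
    ⟨c₁, comp _ _ hc₁⟩, ⟨c₂, comp _ _ hc₂⟩⟩
  calc U * P₁ * Uᴴ + U * P₂ * Uᴴ = U * (P₁ + P₂) * Uᴴ := by
        rw [Matrix.mul_add, Matrix.add_mul]
    _ = 1 := by rw [hsum, Matrix.mul_one, hU]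

/-- Every Hermitian matrix in `M₃(ℂ)` has a 2-coloring. -/
theorem hermitian_m3_two_coloring (A : Matrix (Fin 3) (Fin 3) ℂ) (hA : A.IsHermitian) :
    ∃ P₁ P₂ : Matrix (Fin 3) (Fin 3) ℂ,
      IsProjection P₁ ∧ IsProjection P₂ ∧ P₁ + P₂ = 1 ∧
      (∃ c : ℂ, P₁ * A * P₁ = c • P₁) ∧ (∃ c : ℂ, P₂ * A * P₂ = c • P₂) := by
  classical
  set d := hA.eigenvalues with hd
  set V : Matrix (Fin 3) (Fin 3) ℂ := (hA.eigenvectorUnitary : Matrix (Fin 3) (Fin 3) ℂ) with hV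
  have hVmem := hA.eigenvectorUnitary.2
  rw [Matrix.mem_unitaryGroup_iff] at hVmem
  have hVmem' := hA.eigenvectorUnitary.2
  rw [Matrix.mem_unitaryGroup_iff'] at hVmem'
  have hspec : A = V * Matrix.diagonal (fun i => (d i : ℂ)) * Vᴴ := by
    have := hA.spectral_theorem
    rw [Unitary.conjStarAlgAut_apply] at this
    exact this
  -- choose permuted eigenvalues with median first
  obtain ⟨e, U, hmed, hU, hU', hdiag⟩ :
      ∃ (e : Fin 3 → ℝ) (U : Matrix (Fin 3) (Fin 3) ℂ),
        (e 1 - e 0) * (e 2 - e 0) ≤ 0 ∧ U * Uᴴ = 1 ∧ Uᴴ * U = 1 ∧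
        Matrix.diagonal (fun i => (d i : ℂ)) = U * Matrix.diagonal (fun i => (e i : ℂ)) * Uᴴ := by
    rcases median d with hm | hm | hm
    · exact ⟨d, 1, hm, by simp, by simp, by simp⟩
    · refine ⟨![d 1, d 0, d 2], !![0,1,0;1,0,0;0,0,1], by simpa using hm, ?_, ?_, ?_⟩ <;>
        · ext i j
          fin_cases i <;> fin_cases j <;>
            simp [Matrix.mul_apply, Fin.sum_univ_three, vecHead, vecTail,
              Matrix.conjTranspose_apply, Matrix.one_apply, Matrix.diagonal]
    · refine ⟨![d 2, d 1, d 0], !![0,0,1;0,1,0;1,0,0], by simpa [mul_comm] using hm, ?_, ?_, ?_⟩ <;>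
        · ext i j
          fin_cases i <;> fin_cases j <;>
            simp [Matrix.mul_apply, Fin.sum_univ_three, vecHead, vecTail,
              Matrix.conjTranspose_apply, Matrix.one_apply, Matrix.diagonal]
  obtain ⟨a, b, hn, key⟩ := exists_ab (e 0) (e 1) (e 2) hmed
  have hcore := core_diag e a b hn key
  have step1 := conj_transfer U (Matrix.diagonal (fun i => (e i : ℂ))) hU hU' hcore
  rw [← hdiag] at step1
  have step2 := conj_transfer V (Matrix.diagonal (fun i => (d i : ℂ))) hVmem hVmem' step1
  rw [← hspec] at step2
  exact step2
end

section
/- For every n ≥ 1 there exists a Hermitian matrix A ∈ M_n(ℂ) that has no ⌊log₂ n⌋-coloring. (For example, the diagonal matrix with diagonal entries (n+1)ⁿ, (n+1)^{n-1}, …, n+1 has no k-coloring whenever n ≥ 2^k.) -/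
open Matrix

set_option maxHeartbeats 1000000

namespace NoColoringAux


variable {n : ℕ}

noncomputable def dR (n : ℕ) (s : Fin n) : ℝ := ((n : ℝ) + 1) ^ (n - (s : ℕ))

lemma dR_pos (s : Fin n) : 0 < dR n s := by unfold dR; positivity

lemma diagA_eq :
    (fun i : Fin n => ((n : ℂ) + 1) ^ (n - (i : ℕ))) = fun s => ((dR n s : ℝ) : ℂ) := by
  funext s; unfold dR; push_cast; ring

lemma dot_self_eq (w : Fin n → ℂ) :
    star w ⬝ᵥ w = ((∑ s, Complex.normSq (w s) : ℝ) : ℂ) := by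
  push_cast
  simp only [dotProduct, Pi.star_apply]
  congr 1; funext s
  rw [Complex.normSq_eq_conj_mul_self]; rfl

lemma dot_diag_eq (d : Fin n → ℝ) (w : Fin n → ℂ) :
    star w ⬝ᵥ ((Matrix.diagonal fun s => ((d s : ℝ) : ℂ)) *ᵥ w)
      = ((∑ s, d s * Complex.normSq (w s) : ℝ) : ℂ) := by
  push_cast
  simp only [dotProduct, Pi.star_apply, Matrix.mulVec_diagonal]
  congr 1; funext s
  rw [Complex.normSq_eq_conj_mul_self, Complex.star_def]; push_cast; ring

lemma proj_dot {P : Matrix (Fin n) (Fin n) ℂ} (hH : Pᴴ = P) (v z : Fin n → ℂ) :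
    star (P *ᵥ v) ⬝ᵥ z = star v ⬝ᵥ (P *ᵥ z) := by
  rw [Matrix.star_mulVec, hH, ← Matrix.dotProduct_mulVec]

lemma anticlique_dot {A P : Matrix (Fin n) (Fin n) ℂ} {c : ℂ}
    (hH : Pᴴ = P) (hI : P * P = P) (hA : P * A * P = c • P) (v : Fin n → ℂ) :
    star (P *ᵥ v) ⬝ᵥ (A *ᵥ (P *ᵥ v)) = c * (star (P *ᵥ v) ⬝ᵥ (P *ᵥ v)) ∧
      star v ⬝ᵥ (P *ᵥ v) = star (P *ᵥ v) ⬝ᵥ (P *ᵥ v) := by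
  have h1 : star (P *ᵥ v) ⬝ᵥ (P *ᵥ v) = star v ⬝ᵥ (P *ᵥ v) := by
    rw [proj_dot hH, Matrix.mulVec_mulVec, hI]
  refine ⟨?_, h1.symm⟩
  rw [proj_dot hH, Matrix.mulVec_mulVec, Matrix.mulVec_mulVec, hA,
    Matrix.smul_mulVec, dotProduct_smul, h1, smul_eq_mul]

lemma rank_add_le' (A B : Matrix (Fin n) (Fin n) ℂ) : (A + B).rank ≤ A.rank + B.rank := by
  have hle : LinearMap.range (A + B).mulVecLin ≤
      LinearMap.range A.mulVecLin ⊔ LinearMap.range B.mulVecLin := by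
    rintro _ ⟨v, rfl⟩
    rw [Matrix.mulVecLin_add]
    exact Submodule.add_mem_sup ⟨v, rfl⟩ ⟨v, rfl⟩
  exact (Submodule.finrank_mono hle).trans
    (Submodule.finrank_add_le_finrank_add_finrank _ _)

lemma rank_sum_le {ι : Type*} (T : Finset ι) (M : ι → Matrix (Fin n) (Fin n) ℂ) :
    (∑ i ∈ T, M i).rank ≤ ∑ i ∈ T, (M i).rank := by
  classical
  induction T using Finset.cons_induction with
  | empty => simp
  | cons a T ha ih =>
      rw [Finset.sum_cons, Finset.sum_cons]
      exact (rank_add_le' _ _).trans (by omega)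

lemma sum_mulVec {ι : Type*} (T : Finset ι) (M : ι → Matrix (Fin n) (Fin n) ℂ)
    (x : Fin n → ℂ) : (∑ i ∈ T, M i) *ᵥ x = ∑ i ∈ T, (M i *ᵥ x) := by
  classical
  induction T using Finset.cons_induction with
  | empty => simp
  | cons a T ha ih => rw [Finset.sum_cons, Finset.sum_cons, Matrix.add_mulVec, ih]

lemma dot_sum {ι : Type*} (T : Finset ι) (v : Fin n → ℂ) (w : ι → Fin n → ℂ) :
    v ⬝ᵥ (∑ i ∈ T, w i) = ∑ i ∈ T, v ⬝ᵥ w i := by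
  classical
  induction T using Finset.cons_induction with
  | empty => simp
  | cons a T ha ih => rw [Finset.sum_cons, Finset.sum_cons, dotProduct_add, ih]

lemma mulVec_sum' {ι : Type*} (T : Finset ι) (A : Matrix (Fin n) (Fin n) ℂ)
    (w : ι → Fin n → ℂ) : A *ᵥ (∑ i ∈ T, w i) = ∑ i ∈ T, A *ᵥ w i := by
  classical
  induction T using Finset.cons_induction with
  | empty => simp
  | cons a T ha ih => rw [Finset.sum_cons, Finset.sum_cons, Matrix.mulVec_add, ih]

/-- extension by zero as a linear map -/
noncomputable def extE (m : ℕ) : (Fin m → ℂ) →ₗ[ℂ] (Fin n → ℂ) where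
  toFun y := fun s => if hs : (s : ℕ) < m then y ⟨s, hs⟩ else 0
  map_add' y z := by funext s; by_cases hs : (s : ℕ) < m <;> simp [hs]
  map_smul' a y := by funext s; by_cases hs : (s : ℕ) < m <;> simp [hs]

lemma exists_supported_ker {R : ℕ} (hR : R + 1 ≤ n) (Q : Matrix (Fin n) (Fin n) ℂ)
    (hrk : Q.rank ≤ R) :
    ∃ x : Fin n → ℂ, x ≠ 0 ∧ Q *ᵥ x = 0 ∧ ∀ s : Fin n, R < (s : ℕ) → x s = 0 := by
  by_contra hcon
  push_neg at hcon
  set E := extE (n := n) (R + 1) with hE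
  have hker : ∀ y : Fin (R + 1) → ℂ, Q.mulVecLin (E y) = 0 → y = 0 := by
    intro y hy
    by_contra hy0
    have hx0 : E y ≠ 0 := by
      intro h
      apply hy0
      funext t
      have := congrFun h (Fin.castLE hR t)
      simpa [hE, extE, t.isLt, Fin.ext_iff, Nat.le_of_lt_succ t.isLt] using this
    obtain ⟨s, hs1, hs2⟩ := hcon (E y) hx0 (by simpa [Matrix.mulVecLin_apply] using hy)
    simp only [hE, extE, LinearMap.coe_mk, AddHom.coe_mk] at hs2
    rw [dif_neg (by omega)] at hs2
    exact hs2 rfl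
  have hinj : Function.Injective (Q.mulVecLin.comp E) := by
    rw [← LinearMap.ker_eq_bot, LinearMap.ker_eq_bot']
    intro y hy
    exact hker y hy
  set G := (Q.mulVecLin.comp E).codRestrict (LinearMap.range Q.mulVecLin)
    (fun y => ⟨E y, rfl⟩) with hG
  have hGinj : Function.Injective G := fun a b hab => hinj (congrArg Subtype.val hab)
  have hfr := LinearMap.finrank_le_finrank_of_injective hGinj
  rw [Module.finrank_pi, Fintype.card_fin] at hfr
  have : R + 1 ≤ Q.rank := hfr
  omega

lemma rank_le_of_anticlique {R : ℕ} (hR : R + 1 ≤ n)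
    {P : Matrix (Fin n) (Fin n) ℂ} {γ : ℝ}
    (hkey : ∀ w ∈ LinearMap.range P.mulVecLin,
      ∑ s, dR n s * Complex.normSq (w s) = γ * ∑ s, Complex.normSq (w s))
    (hgap : ∀ s : Fin n, R < (s : ℕ) → dR n s < γ) :
    P.rank ≤ R + 1 := by
  set W := LinearMap.range P.mulVecLin with hW
  set F := (LinearMap.funLeft ℂ ℂ (Fin.castLE hR)).comp W.subtype with hF
  have hinj : Function.Injective F := by
    rw [← LinearMap.ker_eq_bot, LinearMap.ker_eq_bot']
    rintro ⟨w, hw⟩ h0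
    have h0' : ∀ t : Fin (R + 1), w (Fin.castLE hR t) = 0 := fun t => congrFun h0 t
    have hzero : ∀ s : Fin n, (s : ℕ) ≤ R → w s = 0 := by
      intro s hs
      have hc : Fin.castLE hR ⟨(s : ℕ), by omega⟩ = s := by apply Fin.ext; rfl
      have := h0' ⟨(s : ℕ), by omega⟩
      rwa [hc] at this
    have hk := hkey w hw
    have hsum0 : ∑ s, (γ - dR n s) * Complex.normSq (w s) = 0 := by
      simp only [sub_mul]
      rw [Finset.sum_sub_distrib, ← Finset.mul_sum, ← hk, sub_self]
    have hterm : ∀ s ∈ Finset.univ, 0 ≤ (γ - dR n s) * Complex.normSq (w s) := by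
      intro s _
      by_cases hs : (s : ℕ) ≤ R
      · rw [hzero s hs]; simp
      · have h2 := hgap s (by omega)
        have h3 := Complex.normSq_nonneg (w s)
        nlinarith
    have hall := (Finset.sum_eq_zero_iff_of_nonneg hterm).mp hsum0
    have hwz : w = 0 := by
      funext s
      by_cases hs : (s : ℕ) ≤ R
      · exact hzero s hs
      · have h1 := hall s (Finset.mem_univ s)
        have h2 := hgap s (by omega)
        have h3 : Complex.normSq (w s) = 0 := by
          rcases mul_eq_zero.mp h1 with h | h
          · nlinarith
          · exact h
        exact Complex.normSq_eq_zero.mp h3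
    exact Subtype.ext hwz
  have hfr := LinearMap.finrank_le_finrank_of_injective hinj
  rw [Module.finrank_pi, Fintype.card_fin] at hfr
  rw [Matrix.rank]
  exact hfr



lemma no_coloring {n k : ℕ} (hk : 2 ^ k ≤ n)
    (P : Fin k → Matrix (Fin n) (Fin n) ℂ)
    (hsum : ∑ i, P i = 1)
    (hH : ∀ i, (P i)ᴴ = P i) (hI : ∀ i, P i * P i = P i)
    (c : Fin k → ℂ)
    (hc : ∀ i, P i * (Matrix.diagonal fun s => ((dR n s : ℝ) : ℂ)) * P i = c i • P i) :
    False := by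
  classical
  set A : Matrix (Fin n) (Fin n) ℂ := Matrix.diagonal fun s => ((dR n s : ℝ) : ℂ) with hA
  -- the scalar (real part) of each color
  set γ : Fin k → ℝ := fun i => (c i).re with hγ
  -- main induction
  have claim : ∀ m, m ≤ k → ∃ T : Finset (Fin k),
      T.card = m ∧ (∑ i ∈ T, (P i).rank) + 1 ≤ 2 ^ m := by
    intro m
    induction m with
    | zero => intro _; exact ⟨∅, by simp, by simp⟩
    | succ m IH =>
      intro hm
      obtain ⟨T, hTc, hTr⟩ := IH (by omega)
      obtain ⟨R, hRdef⟩ : ∃ R, ∑ i ∈ T, (P i).rank = R := ⟨_, rfl⟩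
      rw [hRdef] at hTr
      have h2m : 2 ^ (m + 1) ≤ n := le_trans (Nat.pow_le_pow_right (by norm_num) hm) hk
      have h1m : 1 ≤ 2 ^ m := Nat.one_le_two_pow
      have hpow : 2 ^ (m + 1) = 2 ^ m * 2 := pow_succ 2 m
      have hR2 : R + 2 ≤ n := by omega
      have hRn : R < n := by omega
      set Q : Matrix (Fin n) (Fin n) ℂ := ∑ i ∈ T, P i with hQ
      have hQrank : Q.rank ≤ R := hRdef ▸ rank_sum_le T P
      obtain ⟨x, hx0, hQx, hxs⟩ := exists_supported_ker (by omega) Q hQrank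
      set u : Fin k → Fin n → ℂ := fun i => P i *ᵥ x with hu
      have hcompl : ∑ i ∈ Tᶜ, P i = 1 - Q := by
        have h := Finset.sum_add_sum_compl T P
        rw [hsum] at h
        rw [← h]; abel
      have hxdec : ∑ i ∈ Tᶜ, u i = x := by
        rw [show ∑ i ∈ Tᶜ, u i = (∑ i ∈ Tᶜ, P i) *ᵥ x from (sum_mulVec _ _ x).symm,
          hcompl, Matrix.sub_mulVec, Matrix.one_mulVec, hQx, sub_zero]
      -- real quantities
      set ν : ℝ := ∑ s, Complex.normSq (x s) with hνdef
      set τ : ℝ := ∑ s, dR n s * Complex.normSq (x s) with hτdef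
      set α : Fin k → ℝ := fun i => ∑ s, Complex.normSq (u i s) with hαdef
      set e : Fin k → ℝ := fun i => ∑ s, dR n s * Complex.normSq (u i s) with hedef
      have hαnn : ∀ i, 0 ≤ α i := fun i =>
        Finset.sum_nonneg fun s _ => Complex.normSq_nonneg _
      -- identities per color
      have hei : ∀ i, e i = γ i * α i := by
        intro i
        have h := (anticlique_dot (hH i) (hI i) (hc i) x).1
        rw [dot_diag_eq, dot_self_eq] at h
        have h2 := congrArg Complex.re h
        simpa [Complex.mul_re] using h2
      have hαid : ∀ i, star x ⬝ᵥ u i = ((α i : ℝ) : ℂ) := by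
        intro i
        rw [hu]
        simp only
        rw [(anticlique_dot (hH i) (hI i) (hc i) x).2, dot_self_eq]
      have hν : ∑ i ∈ Tᶜ, α i = ν := by
        have h1 : ∑ i ∈ Tᶜ, (star x ⬝ᵥ u i) = star x ⬝ᵥ x := by
          rw [← dot_sum, hxdec]
        rw [dot_self_eq] at h1
        simp only [hαid] at h1
        rw [← Complex.ofReal_sum] at h1
        exact_mod_cast h1
      have hνpos : 0 < ν := by
        obtain ⟨s, hs⟩ := Function.ne_iff.mp hx0
        exact Finset.sum_pos' (fun s _ => Complex.normSq_nonneg _)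
          ⟨s, Finset.mem_univ s, Complex.normSq_pos.mpr hs⟩
      set R' : Fin n := ⟨R, hRn⟩ with hR'
      have hτν : dR n R' * ν ≤ τ := by
        rw [hνdef, Finset.mul_sum]
        apply Finset.sum_le_sum
        intro s _
        by_cases hs : (s : ℕ) ≤ R
        · apply mul_le_mul_of_nonneg_right _ (Complex.normSq_nonneg _)
          have hb : (1:ℝ) ≤ (n:ℝ) + 1 := by
            have := Nat.cast_nonneg (α := ℝ) n
            linarith
          have hre : dR n R' = ((n:ℝ) + 1) ^ (n - R) := rfl
          rw [hre]
          unfold dR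
          exact pow_le_pow_right₀ hb (Nat.sub_le_sub_left hs n)
        · rw [hxs s (by omega)]
          simp
      have hτpos : 0 < τ := lt_of_lt_of_le (mul_pos (dR_pos _) hνpos) hτν
      -- beta
      set β : Fin k → ℂ := fun i => star x ⬝ᵥ (A *ᵥ u i) with hβdef
      have hβsum : ∑ i ∈ Tᶜ, β i = ((τ : ℝ) : ℂ) := by
        calc ∑ i ∈ Tᶜ, β i = star x ⬝ᵥ (A *ᵥ ∑ i ∈ Tᶜ, u i) := by
              rw [mulVec_sum', dot_sum]
          _ = ((τ : ℝ) : ℂ) := by rw [hxdec, hA, dot_diag_eq, hτdef]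
      have hτre : τ = ∑ i ∈ Tᶜ, (β i).re := by
        have := congrArg Complex.re hβsum
        rw [Complex.re_sum] at this
        simpa using this.symm
      -- Cauchy-Schwarz per color
      have hβ2 : ∀ i, (β i).re ^ 2 ≤ τ * e i := by
        intro i
        have hβi : β i = ∑ s, star (x s) * (((dR n s : ℝ) : ℂ) * u i s) := by
          simp [hβdef, hA, dotProduct, Matrix.mulVec_diagonal]
        have habs : ‖β i‖ ≤
            ∑ s, (Real.sqrt (dR n s) * ‖x s‖) *
              (Real.sqrt (dR n s) * ‖u i s‖) := by
          rw [hβi]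
          refine le_trans (norm_sum_le _ _) (Finset.sum_le_sum fun s _ => ?_)
          simp only [norm_mul]
          have h1 : ‖star (x s)‖ = ‖x s‖ := norm_star _
          have h2 : ‖((dR n s : ℝ) : ℂ)‖ = dR n s := by
            simp [abs_of_pos (dR_pos s)]
          have h3 : Real.sqrt (dR n s) * Real.sqrt (dR n s) = dR n s :=
            Real.mul_self_sqrt (dR_pos s).le
          rw [h1, h2]
          apply le_of_eq
          linear_combination (-(‖x s‖ * ‖u i s‖)) * h3
        have hcs := Finset.sum_mul_sq_le_sq_mul_sq Finset.univ
          (fun s => Real.sqrt (dR n s) * ‖x s‖)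
          (fun s => Real.sqrt (dR n s) * ‖u i s‖)
        have hf2 : ∑ s, (Real.sqrt (dR n s) * ‖x s‖) ^ 2 = τ := by
          rw [hτdef]
          refine Finset.sum_congr rfl fun s _ => ?_
          rw [mul_pow, Real.sq_sqrt (dR_pos s).le, Complex.sq_norm]
        have hg2 : ∑ s, (Real.sqrt (dR n s) * ‖u i s‖) ^ 2 = e i := by
          rw [hedef]
          refine Finset.sum_congr rfl fun s _ => ?_
          rw [mul_pow, Real.sq_sqrt (dR_pos s).le, Complex.sq_norm]
        rw [hf2, hg2] at hcs
        have hre : |(β i).re| ≤ ‖β i‖ := Complex.abs_re_le_norm _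
        have hsum_nn : (0:ℝ) ≤ ∑ s, (Real.sqrt (dR n s) * ‖x s‖) *
              (Real.sqrt (dR n s) * ‖u i s‖) :=
          Finset.sum_nonneg fun s _ => by positivity
        nlinarith [norm_nonneg (β i), abs_nonneg ((β i).re), sq_abs ((β i).re)]
      -- global Cauchy-Schwarz
      have hcard : (Tᶜ).card = k - m := by
        rw [Finset.card_compl, hTc, Fintype.card_fin]
      have hcmpos : 0 < k - m := by omega
      have hCS1 : τ ^ 2 ≤ ((Tᶜ).card : ℝ) * ∑ i ∈ Tᶜ, (β i).re ^ 2 := by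
        have h := Finset.sum_mul_sq_le_sq_mul_sq Tᶜ (fun _ => (1 : ℝ))
          (fun i => (β i).re)
        have h1 : ∑ i ∈ Tᶜ, (1:ℝ) * (β i).re = τ := by
          rw [hτre]
          exact Finset.sum_congr rfl fun i _ => one_mul _
        have h2 : ∑ _i ∈ Tᶜ, ((1:ℝ))^2 = ((Tᶜ).card : ℝ) := by simp
        rw [h1, h2] at h
        exact h
      have hCS2 : ∑ i ∈ Tᶜ, (β i).re ^ 2 ≤ τ * ∑ i ∈ Tᶜ, e i := by
        rw [Finset.mul_sum]
        exact Finset.sum_le_sum fun i _ => hβ2 i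
      have hτle : τ ≤ ((Tᶜ).card : ℝ) * ∑ i ∈ Tᶜ, e i := by
        have hcnn : (0:ℝ) ≤ ((Tᶜ).card : ℝ) := Nat.cast_nonneg _
        nlinarith
      -- pick color with max γ
      have hne : (Tᶜ).Nonempty := Finset.card_pos.mp (by omega)
      obtain ⟨i₀, hi₀, hmax⟩ := Finset.exists_max_image Tᶜ γ hne
      have hsume : ∑ i ∈ Tᶜ, e i ≤ γ i₀ * ν := by
        calc ∑ i ∈ Tᶜ, e i = ∑ i ∈ Tᶜ, γ i * α i :=
              Finset.sum_congr rfl fun i _ => hei i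
          _ ≤ ∑ i ∈ Tᶜ, γ i₀ * α i :=
              Finset.sum_le_sum fun i hi =>
                mul_le_mul_of_nonneg_right (hmax i hi) (hαnn i)
          _ = γ i₀ * ν := by rw [← Finset.mul_sum, hν]
      have hdRγ : dR n R' ≤ ((Tᶜ).card : ℝ) * γ i₀ := by
        have h1 : dR n R' * ν ≤ (((Tᶜ).card : ℝ) * γ i₀) * ν := by
          calc dR n R' * ν ≤ τ := hτν
            _ ≤ ((Tᶜ).card : ℝ) * ∑ i ∈ Tᶜ, e i := hτle
            _ ≤ ((Tᶜ).card : ℝ) * (γ i₀ * ν) :=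
                mul_le_mul_of_nonneg_left hsume (Nat.cast_nonneg _)
            _ = (((Tᶜ).card : ℝ) * γ i₀) * ν := by ring
        exact le_of_mul_le_mul_right h1 hνpos
      -- gap property
      have hkn : (k : ℝ) < (n : ℝ) + 1 := by
        have h1 : k < 2 ^ k := Nat.lt_two_pow_self
        have h2 : k ≤ n := by omega
        have h3 : (k : ℝ) ≤ (n : ℝ) := Nat.cast_le.mpr h2
        linarith
      have hgap : ∀ s : Fin n, R < (s : ℕ) → dR n s < γ i₀ := by
        intro s hs
        obtain ⟨j, hj⟩ : ∃ j, j = n - R - 1 := ⟨_, rfl⟩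
        have hb : (1:ℝ) ≤ (n:ℝ) + 1 := by
          have := Nat.cast_nonneg (α := ℝ) n
          linarith
        have hds : dR n s ≤ ((n : ℝ) + 1) ^ j := by
          unfold dR
          exact pow_le_pow_right₀ hb (by omega)
        have hdR' : dR n R' = ((n : ℝ) + 1) ^ j * ((n : ℝ) + 1) := by
          have hcalc : dR n R' = ((n:ℝ) + 1) ^ (n - R) := rfl
          rw [hcalc, show n - R = j + 1 from by omega, pow_succ]
        have hBpos : (0:ℝ) < ((n : ℝ) + 1) ^ j := by positivity
        have hcle : ((Tᶜ).card : ℝ) ≤ (k : ℝ) := by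
          exact_mod_cast Nat.cast_le.mpr (by omega : (Tᶜ).card ≤ k)
        have hcpos : (0:ℝ) < ((Tᶜ).card : ℝ) := by
          exact_mod_cast Nat.cast_pos.mpr (by omega : 0 < (Tᶜ).card)
        nlinarith
      -- rank bound for color i₀
      have hkey : ∀ w ∈ LinearMap.range (P i₀).mulVecLin,
          ∑ s, dR n s * Complex.normSq (w s) = γ i₀ * ∑ s, Complex.normSq (w s) := by
        rintro w ⟨v, rfl⟩
        rw [Matrix.mulVecLin_apply]
        have h := (anticlique_dot (hH i₀) (hI i₀) (hc i₀) v).1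
        rw [dot_diag_eq, dot_self_eq] at h
        have h2 := congrArg Complex.re h
        simpa [Complex.mul_re] using h2
      have hrank : (P i₀).rank ≤ R + 1 :=
        rank_le_of_anticlique (by omega) hkey hgap
      -- build new T
      have hi₀T : i₀ ∉ T := Finset.mem_compl.mp hi₀
      refine ⟨insert i₀ T, ?_, ?_⟩
      · rw [Finset.card_insert_of_notMem hi₀T, hTc]
      · rw [Finset.sum_insert hi₀T, hRdef]
        omega
  obtain ⟨T, hTc, hTr⟩ := claim k le_rfl
  have hTuniv : T = Finset.univ :=
    Finset.eq_univ_of_card T (by rw [hTc, Fintype.card_fin])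
  have hn : n ≤ ∑ i ∈ T, (P i).rank := by
    have h1 : (∑ i ∈ T, P i).rank = n := by
      rw [hTuniv, hsum, Matrix.rank_one, Fintype.card_fin]
    calc n = (∑ i ∈ T, P i).rank := h1.symm
      _ ≤ ∑ i ∈ T, (P i).rank := rank_sum_le T P
  omega


end NoColoringAux

/-- For every `n ≥ 1` there is a Hermitian matrix in `M_n(ℂ)` with no
`⌊log₂ n⌋`-coloring.  Indeed the diagonal matrix with entries
`(n+1)ⁿ, (n+1)^{n-1}, …, n+1` has no `k`-coloring whenever `n ≥ 2^k`. -/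
theorem exists_hermitian_no_log_coloring :
    (∀ n : ℕ, 1 ≤ n →
      ∃ A : Matrix (Fin n) (Fin n) ℂ, A.IsHermitian ∧
        ¬ ∃ P : Fin (Nat.log 2 n) → Matrix (Fin n) (Fin n) ℂ,
            IsMatrixColoring A (Nat.log 2 n) P) ∧
    (∀ n k : ℕ, 2 ^ k ≤ n →
      ¬ ∃ P : Fin k → Matrix (Fin n) (Fin n) ℂ,
          IsMatrixColoring
            (Matrix.diagonal fun i : Fin n => ((n : ℂ) + 1) ^ (n - (i : ℕ))) k P) := by
  have part2 : ∀ n k : ℕ, 2 ^ k ≤ n →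
      ¬ ∃ P : Fin k → Matrix (Fin n) (Fin n) ℂ,
          IsMatrixColoring
            (Matrix.diagonal fun i : Fin n => ((n : ℂ) + 1) ^ (n - (i : ℕ))) k P := by
    intro n k hk hEx
    obtain ⟨P, hsum, hprop⟩ := hEx
    choose c hc using fun i => (hprop i).2
    have hH : ∀ i, (P i)ᴴ = (P i) := fun i => Matrix.IsHermitian.eq ((hprop i).1).1
    have hI : ∀ i, P i * P i = P i := fun i => ((hprop i).1).2
    have hAeq : (Matrix.diagonal fun i : Fin n => ((n : ℂ) + 1) ^ (n - (i : ℕ)))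
        = Matrix.diagonal (fun s => ((NoColoringAux.dR n s : ℝ) : ℂ)) := by
      rw [NoColoringAux.diagA_eq]
    simp only [hAeq] at hc
    exact NoColoringAux.no_coloring hk P hsum hH hI c hc
  refine ⟨?_, part2⟩
  intro n hn
  refine ⟨Matrix.diagonal fun i : Fin n => ((n : ℂ) + 1) ^ (n - (i : ℕ)), ?_, ?_⟩
  · rw [Matrix.isHermitian_diagonal_iff]
    intro i
    apply IsSelfAdjoint.pow
    rw [_root_.IsSelfAdjoint, star_add, star_one, star_natCast]
  · exact part2 n (Nat.log 2 n) (Nat.pow_log_le_self 2 (by omega))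
end
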